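/- arXiv:0903.3660 — 5 statements merged into one kernel-verified Lean document; each statement's English description precedes it below -/
import Mathlib

section
/- If U : V₊ → V₋ is unitary, then S_U equals its J-orthogonal complement: S_U = {w ∈ V : w J s* = 0 for all s ∈ S_U}. -/
open Matrix Complex

noncomputable def matJ : Matrix (Fin 4) (Fin 4) ℂ :=
  !![0, I, 0, 0; -I, 0, 0, 0; 0, 0, 0, I; 0, 0, -I, 0]

noncomputable def Pplus : Matrix (Fin 4) (Fin 4) ℂ := (1/2 : ℂ) • (1 + matJ)
noncomputable def Pminus : Matrix (Fin 4) (Fin 4) ℂ := (1/2 : ℂ) • (1 - matJ)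
noncomputable def Vplus : Submodule ℂ (Fin 4 → ℂ) := LinearMap.range (Matrix.vecMulLinear Pplus)
noncomputable def Vminus : Submodule ℂ (Fin 4 → ℂ) := LinearMap.range (Matrix.vecMulLinear Pminus)

/-- `U` is a unitary map from `V₊` onto `V₋` (w.r.t. the restricted standard
Hermitian inner products of rows). -/
def IsUnitaryPlusMinus (U : (Fin 4 → ℂ) →ₗ[ℂ] (Fin 4 → ℂ)) : Prop :=
  (∀ v ∈ Vplus, U v ∈ Vminus) ∧
  (∀ v ∈ Vplus, ∀ w ∈ Vplus, (U v) ⬝ᵥ star (U w) = v ⬝ᵥ star w) ∧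
  (∀ w ∈ Vminus, ∃ v ∈ Vplus, U v = w)

/-- `S_U = {v + vU : v ∈ V₊}`. -/
def SU (U : (Fin 4 → ℂ) →ₗ[ℂ] (Fin 4 → ℂ)) : Set (Fin 4 → ℂ) :=
  {x | ∃ v ∈ Vplus, x = v + U v}

lemma matJ_sq : matJ * matJ = 1 := by
  ext i j
  fin_cases i <;> fin_cases j <;>
    simp [matJ, Matrix.mul_apply, Fin.sum_univ_four, Matrix.one_apply] <;>
    ring_nf <;> simp [Complex.I_sq, Matrix.vecHead, Matrix.vecTail]

lemma matJ_herm : matJᴴ = matJ := by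
  ext i j
  fin_cases i <;> fin_cases j <;> simp [matJ, Matrix.vecHead, Matrix.vecTail]

lemma vecMul_smulMat (v : Fin 4 → ℂ) (a : ℂ) (M : Matrix (Fin 4) (Fin 4) ℂ) :
    v ᵥ* (a • M) = a • (v ᵥ* M) := by
  ext i
  simp [Matrix.vecMul, dotProduct, Finset.mul_sum, mul_left_comm]

lemma mem_Vplus (v : Fin 4 → ℂ) : v ∈ Vplus ↔ v ᵥ* matJ = v := by
  constructor
  · rintro ⟨u, rfl⟩
    simp only [Matrix.vecMulLinear_apply, Matrix.vecMul_vecMul]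
    rw [Pplus, Matrix.smul_mul, Matrix.add_mul, Matrix.one_mul, matJ_sq, add_comm]
  · intro h
    refine ⟨v, ?_⟩
    simp only [Matrix.vecMulLinear_apply, Pplus, vecMul_smulMat, Matrix.vecMul_add,
      Matrix.vecMul_one, h]
    ext i; simp; ring

lemma mem_Vminus (v : Fin 4 → ℂ) : v ∈ Vminus ↔ v ᵥ* matJ = -v := by
  constructor
  · rintro ⟨u, rfl⟩
    simp only [Matrix.vecMulLinear_apply, Matrix.vecMul_vecMul]
    rw [show Pminus * matJ = -Pminus by
      rw [Pminus, Matrix.smul_mul, Matrix.sub_mul, Matrix.one_mul, matJ_sq, ← smul_neg]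
      congr 1; abel]
    simp [Matrix.vecMul_neg]
  · intro h
    refine ⟨v, ?_⟩
    simp only [Matrix.vecMulLinear_apply, Pminus, vecMul_smulMat, Matrix.vecMul_sub,
      Matrix.vecMul_one, h]
    ext i; simp; ring

lemma orth_pm {v w : Fin 4 → ℂ} (hv : v ∈ Vplus) (hw : w ∈ Vminus) :
    v ⬝ᵥ star w = 0 := by
  rw [mem_Vplus] at hv; rw [mem_Vminus] at hw
  have h2 : (v ᵥ* matJ) ⬝ᵥ star w = v ⬝ᵥ (matJ *ᵥ star w) :=
    (Matrix.dotProduct_mulVec _ _ _).symm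
  have h3 : matJ *ᵥ star w = - star w := by
    rw [← matJ_herm, ← Matrix.star_vecMul, hw, star_neg]
  rw [hv, h3, dotProduct_neg] at h2
  linear_combination h2 / 2

lemma orth_mp {v w : Fin 4 → ℂ} (hv : v ∈ Vplus) (hw : w ∈ Vminus) :
    w ⬝ᵥ star v = 0 := by
  have h : w ⬝ᵥ star v = star (v ⬝ᵥ star w) := by
    rw [← Matrix.star_dotProduct_star, star_star]
  rw [h, orth_pm hv hw, star_zero]

lemma dot_star_self_zero {v : Fin 4 → ℂ} (h : v ⬝ᵥ star v = 0) : v = 0 := by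
  have heq : v ⬝ᵥ star v = ((∑ i, Complex.normSq (v i) : ℝ) : ℂ) := by
    simp [dotProduct, Complex.mul_conj]
  rw [heq] at h
  have h2 : ∑ i, Complex.normSq (v i) = 0 := by exact_mod_cast h
  have h3 := (Finset.sum_eq_zero_iff_of_nonneg
    (fun i _ => Complex.normSq_nonneg (v i))).1 h2
  funext i
  exact Complex.normSq_eq_zero.1 (h3 i (Finset.mem_univ i))

theorem stmt7 (U : (Fin 4 → ℂ) →ₗ[ℂ] (Fin 4 → ℂ)) (hU : IsUnitaryPlusMinus U) :
    SU U = {w : Fin 4 → ℂ | ∀ s ∈ SU U, Matrix.vecMul w matJ ⬝ᵥ star s = 0} := by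
  obtain ⟨hmap, hinner, hsurj⟩ := hU
  ext w
  constructor
  · rintro ⟨u, hu, rfl⟩ s ⟨v, hv, rfl⟩
    have huJ : u ᵥ* matJ = u := (mem_Vplus u).1 hu
    have hUuJ : (U u) ᵥ* matJ = -(U u) := (mem_Vminus _).1 (hmap u hu)
    rw [Matrix.add_vecMul, huJ, hUuJ]
    have : (u + -(U u)) ⬝ᵥ star (v + U v)
        = u ⬝ᵥ star v + u ⬝ᵥ star (U v) - (U u) ⬝ᵥ star v - (U u) ⬝ᵥ star (U v) := by
      simp [add_dotProduct, neg_dotProduct, dotProduct_add, star_add]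
      ring
    rw [this, orth_pm hu (hmap v hv), orth_mp hv (hmap u hu), hinner u hu v hv]
    ring
  · intro hw
    simp only [Set.mem_setOf_eq] at hw
    set wp := w ᵥ* Pplus with hwp
    set wm := w ᵥ* Pminus with hwm
    have hPP : Pplus + Pminus = 1 := by
      rw [Pplus, Pminus, ← smul_add]
      rw [show (1 : Matrix (Fin 4) (Fin 4) ℂ) + matJ + (1 - matJ) = (2 : ℂ) • 1 by
        rw [two_smul]; abel]
      rw [smul_smul]; norm_num
    have hwdecomp : w = wp + wm := by
      rw [hwp, hwm, ← Matrix.vecMul_add, hPP, Matrix.vecMul_one]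
    have hwpP : wp ∈ Vplus := ⟨w, rfl⟩
    have hwmM : wm ∈ Vminus := ⟨w, rfl⟩
    obtain ⟨v0, hv0, hUv0⟩ := hsurj wm hwmM
    have key : ∀ v ∈ Vplus, (wp - v0) ⬝ᵥ star v = 0 := by
      intro v hv
      have hs : v + U v ∈ SU U := ⟨v, hv, rfl⟩
      have h := hw _ hs
      have hwJ : w ᵥ* matJ = wp - wm := by
        rw [hwdecomp, Matrix.add_vecMul, (mem_Vplus wp).1 hwpP, (mem_Vminus wm).1 hwmM]
        abel
      rw [hwJ] at h
      have hexp : (wp - wm) ⬝ᵥ star (v + U v)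
          = wp ⬝ᵥ star v + wp ⬝ᵥ star (U v) - wm ⬝ᵥ star v - wm ⬝ᵥ star (U v) := by
        simp [sub_dotProduct, dotProduct_add, star_add]
        ring
      rw [hexp, orth_pm hwpP (hmap v hv), orth_mp hv hwmM] at h
      have hwm' : wm ⬝ᵥ star (U v) = v0 ⬝ᵥ star v := by
        rw [← hUv0, hinner v0 hv0 v hv]
      rw [hwm'] at h
      have : (wp - v0) ⬝ᵥ star v = wp ⬝ᵥ star v - v0 ⬝ᵥ star v := by
        simp [sub_dotProduct]
      rw [this]
      linear_combination h
    have hsub : wp - v0 ∈ Vplus := Submodule.sub_mem _ hwpP hv0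
    have hzero : wp - v0 = 0 := dot_star_self_zero (key _ hsub)
    have hwpv0 : wp = v0 := by rwa [sub_eq_zero] at hzero
    refine ⟨wp, hwpP, ?_⟩
    rw [hwdecomp, hwpv0, hUv0]
end

section
/- Let S ⊆ ℂ⁴ be a subspace equal to its own J-orthogonal complement. Then the orthogonal projection map v ↦ v P₊, restricted to S, is injective as a map from S into V₊. -/
open Matrix Complex

theorem stmt8 (S : Submodule ℂ (Fin 4 → ℂ))
    (hS : (S : Set (Fin 4 → ℂ)) =
      {w : Fin 4 → ℂ | ∀ s ∈ S, Matrix.vecMul w matJ ⬝ᵥ star s = 0}) :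
    ∀ v₁ ∈ S, ∀ v₂ ∈ S, Matrix.vecMul v₁ Pplus = Matrix.vecMul v₂ Pplus → v₁ = v₂ := by
  intro v₁ h₁ v₂ h₂ hP
  set v := v₁ - v₂ with hv
  have hvS : v ∈ S := S.sub_mem h₁ h₂
  have hvset : v ∈ {w : Fin 4 → ℂ | ∀ s ∈ S, Matrix.vecMul w matJ ⬝ᵥ star s = 0} := by
    rw [← hS]; exact hvS
  have hself : Matrix.vecMul v matJ ⬝ᵥ star v = 0 := hvset v hvS
  have hPv : Matrix.vecMul v Pplus = 0 := by
    have : Matrix.vecMul v₁ Pplus - Matrix.vecMul v₂ Pplus = 0 := by rw [hP]; simp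
    rw [hv, Matrix.sub_vecMul]; exact this
  have hJ : Matrix.vecMul v matJ = -v := by
    have h2 : Matrix.vecMul v (1 + matJ) = 0 := by
      have h' : (1/2 : ℂ) • Matrix.vecMul v (1 + matJ) = 0 := by
        have key : ∀ (c : ℂ) (M : Matrix (Fin 4) (Fin 4) ℂ) (w : Fin 4 → ℂ),
            Matrix.vecMul w (c • M) = c • Matrix.vecMul w M := by
          intro c M w
          funext j
          simp [Matrix.vecMul, dotProduct, Finset.mul_sum, mul_comm, mul_left_comm]
        rw [← key, ← Pplus]; exact hPv
      have := smul_eq_zero.mp h'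
      rcases this with h | h
      · norm_num at h
      · exact h
    have := h2
    rw [Matrix.vecMul_add, Matrix.vecMul_one] at this
    linear_combination (norm := module) this
  rw [hJ] at hself
  have hzero : v = 0 := by
    have hsum : (∑ i, v i * star (v i)) = 0 := by
      have : -(v ⬝ᵥ star v) = 0 := by simpa using hself
      simpa [dotProduct, Pi.star_apply] using neg_eq_zero.mp this
    have hns : (∑ i, (Complex.normSq (v i) : ℂ)) = 0 := by
      simpa [Complex.mul_conj] using hsum
    funext i
    have hre : (∑ i, Complex.normSq (v i)) = 0 := by
      exact_mod_cast hns
    have : Complex.normSq (v i) = 0 := by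
      have := (Finset.sum_eq_zero_iff_of_nonneg
        (fun j _ => Complex.normSq_nonneg (v j))).mp hre i (Finset.mem_univ i)
      exact this
    simpa using Complex.normSq_eq_zero.mp this
  have := sub_eq_zero.mp (hv ▸ hzero)
  exact this
end

section
/- Let a > 0 and suppose x : (-a, a) → ℂ satisfies: (i) lim_{t→±a} (a² - t²) x'(t) = 0, and (ii) ∫_{-a}^{a} |d/dξ ((a² - ξ²) x'(ξ))|² dξ = C² < ∞. Then |(a² - t²) x'(t)| ≤ C √(a² - t²)/√a for all t ∈ (-a, a), hence |x'(t)| ≤ (C/√a) · 1/√(a² - t²). -/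
/-!
Put `F t = (a² - t²) x'(t)`. By the fundamental theorem of calculus and Cauchy–Schwarz,
`‖F t - F s‖ ≤ C √|t - s|`, so `F` is `1/2`-Hölder. Since `F` vanishes at both endpoints, letting
`s → ±a` gives `‖F t‖ ≤ C √(a - |t|)`, and `a - |t| ≤ (a² - t²)/a` because `a ≤ a + |t|`.
-/

open Set Filter MeasureTheory Topology

variable {E : Type*} [NormedAddCommGroup E]

theorem integral_norm_le_sqrt_measureReal_mul_sqrt_integral_sq {α : Type*} [MeasurableSpace α]
    {μ : Measure α} [IsFiniteMeasure μ] {f : α → E} (hf : MemLp f 2 μ) :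
    ∫ a, ‖f a‖ ∂μ ≤ √(μ.real univ) * √(∫ a, ‖f a‖ ^ 2 ∂μ) := by
  have h := integral_mul_le_Lp_mul_Lq_of_nonneg (p := 2) (q := 2) Real.HolderConjugate.two_two
    (f := fun _ => (1 : ℝ)) (g := fun a => ‖f a‖) (μ := μ) (ae_of_all _ fun _ => zero_le_one)
    (ae_of_all _ fun _ => norm_nonneg _) (by simpa using memLp_const (1 : ℝ))
    (by simpa using hf.norm)
  simpa [Real.sqrt_eq_rpow, Real.rpow_two] using h

section Derivative

variable [NormedSpace ℝ E] [CompleteSpace E]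

theorem norm_sub_le_sqrt_mul_sqrt_integral_of_hasDerivAt {F f : ℝ → E} {s t : ℝ} (hst : s ≤ t)
    (hF : ∀ u ∈ Icc s t, HasDerivAt F (f u) u)
    (hf : IntegrableOn (fun u => ‖f u‖ ^ 2) (Ioc s t)) :
    ‖F t - F s‖ ≤ √(t - s) * √(∫ u in Ioc s t, ‖f u‖ ^ 2) := by
  have hmeas : AEStronglyMeasurable f (volume.restrict (Ioc s t)) :=
    (aestronglyMeasurable_deriv F _).congr <| (ae_restrict_iff' measurableSet_Ioc).mpr <|
      ae_of_all _ fun u hu => (hF u (Ioc_subset_Icc_self hu)).deriv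
  have hL2 : MemLp f 2 (volume.restrict (Ioc s t)) :=
    (memLp_two_iff_integrable_sq_norm hmeas).mpr hf
  have hftc : ∫ u in s..t, f u = F t - F s :=
    intervalIntegral.integral_eq_sub_of_hasDerivAt (fun u hu => hF u (uIcc_of_le hst ▸ hu))
      ((intervalIntegrable_iff_integrableOn_Ioc_of_le hst).mpr (hL2.integrable one_le_two))
  calc ‖F t - F s‖ = ‖∫ u in Ioc s t, f u‖ := by rw [← hftc, intervalIntegral.integral_of_le hst]
    _ ≤ ∫ u in Ioc s t, ‖f u‖ := norm_integral_le_integral_norm _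
    _ ≤ √(t - s) * √(∫ u in Ioc s t, ‖f u‖ ^ 2) := by
      simpa [Real.volume_Ioc, hst] using
        integral_norm_le_sqrt_measureReal_mul_sqrt_integral_sq hL2

theorem norm_sub_le_mul_sqrt_abs_sub_of_hasDerivAt {I : Set ℝ} (hI : I.OrdConnected)
    {F f : ℝ → E} {C : ℝ} (hC : 0 ≤ C) (hF : ∀ u ∈ I, HasDerivAt F (f u) u)
    (hf : IntegrableOn (fun u => ‖f u‖ ^ 2) I) (hfC : ∫ u in I, ‖f u‖ ^ 2 ≤ C ^ 2)
    {s t : ℝ} (hs : s ∈ I) (ht : t ∈ I) :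
    ‖F t - F s‖ ≤ C * √|t - s| := by
  wlog hst : s ≤ t generalizing s t
  · rw [norm_sub_rev, abs_sub_comm]
    exact this ht hs (le_of_not_ge hst)
  have hsub : Icc s t ⊆ I := hI.out hs ht
  have hsub' : Ioc s t ⊆ I := Ioc_subset_Icc_self.trans hsub
  have hle : √(∫ u in Ioc s t, ‖f u‖ ^ 2) ≤ C := by
    refine Real.sqrt_le_iff.mpr ⟨hC, le_trans ?_ hfC⟩
    exact setIntegral_mono_set hf (ae_of_all _ fun _ => sq_nonneg _) hsub'.eventuallyLE
  calc ‖F t - F s‖ ≤ √(t - s) * √(∫ u in Ioc s t, ‖f u‖ ^ 2) :=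
        norm_sub_le_sqrt_mul_sqrt_integral_of_hasDerivAt hst (fun u hu => hF u (hsub hu))
          (hf.mono_set hsub')
    _ ≤ C * √|t - s| := by
      rw [abs_of_nonneg (sub_nonneg.mpr hst), mul_comm C]
      exact mul_le_mul_of_nonneg_left hle (Real.sqrt_nonneg _)

end Derivative

theorem norm_le_mul_sqrt_of_tendsto_zero {F : ℝ → E} {S : Set ℝ} {b t C : ℝ} [(𝓝[S] b).NeBot]
    (h0 : Tendsto F (𝓝[S] b) (𝓝 0)) (hF : ∀ s ∈ S, ‖F t - F s‖ ≤ C * √|t - s|) :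
    ‖F t‖ ≤ C * √|t - b| := by
  have hlhs : Tendsto (fun s => ‖F t - F s‖) (𝓝[S] b) (𝓝 ‖F t - 0‖) :=
    (tendsto_const_nhds.sub h0).norm
  have hrhs : Tendsto (fun s => C * √|t - s|) (𝓝[S] b) (𝓝 (C * √|t - b|)) :=
    ((by fun_prop : Continuous fun s => C * √|t - s|).tendsto b).mono_left nhdsWithin_le_nhds
  simpa using le_of_tendsto_of_tendsto hlhs hrhs (eventually_mem_nhdsWithin.mono hF)

theorem norm_le_mul_sqrt_sub_abs_of_tendsto_zero {F : ℝ → E} {a C t : ℝ} (ht : t ∈ Ioo (-a) a)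
    (h_left : Tendsto F (𝓝[Ioo (-a) a] (-a)) (𝓝 0)) (h_right : Tendsto F (𝓝[Ioo (-a) a] a) (𝓝 0))
    (hF : ∀ s ∈ Ioo (-a) a, ‖F t - F s‖ ≤ C * √|t - s|) :
    ‖F t‖ ≤ C * √(a - |t|) := by
  have ha : -a < a := ht.1.trans ht.2
  rcases le_total 0 t with h | h
  · have := right_nhdsWithin_Ioo_neBot ha
    simpa [abs_of_nonneg h, abs_sub_comm t a, abs_of_pos (sub_pos.mpr ht.2)] using
      norm_le_mul_sqrt_of_tendsto_zero h_right hF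
  · have := left_nhdsWithin_Ioo_neBot ha
    simpa [abs_of_nonpos h, abs_of_pos (show 0 < t + a by linarith [ht.1]), add_comm a t] using
      norm_le_mul_sqrt_of_tendsto_zero h_left hF

theorem sub_abs_le_sq_sub_sq_div {a t : ℝ} (ha : 0 < a) (ht : |t| ≤ a) :
    a - |t| ≤ (a ^ 2 - t ^ 2) / a := by
  rw [le_div_iff₀ ha, ← sq_abs t]
  nlinarith [abs_nonneg t]

theorem norm_le_mul_one_div_sqrt_of_norm_ofReal_mul_le {A K : ℝ} {z : ℂ} (hA : 0 < A)
    (h : ‖(A : ℂ) * z‖ ≤ K * √A) : ‖z‖ ≤ K * (1 / √A) := by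
  rw [norm_mul, Complex.norm_real, Real.norm_of_nonneg hA.le] at h
  calc ‖z‖ ≤ K * √A / A := (le_div_iff₀' hA).mpr h
    _ = K * (1 / √A) := by rw [mul_div_assoc, Real.sqrt_div_self']

theorem stmt14_general (a C : ℝ) (ha : 0 < a) (hC : 0 < C)
    (x' g' : ℝ → ℂ)
    (hg : ∀ t ∈ Ioo (-a) a,
      HasDerivAt (fun s : ℝ => ((a : ℂ)^2 - (s : ℂ)^2) * x' s) (g' t) t)
    (hlim_left :
      Tendsto (fun t : ℝ => ((a : ℂ)^2 - (t : ℂ)^2) * x' t) (nhdsWithin (-a) (Ioo (-a) a)) (nhds 0))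
    (hlim_right :
      Tendsto (fun t : ℝ => ((a : ℂ)^2 - (t : ℂ)^2) * x' t) (nhdsWithin a (Ioo (-a) a)) (nhds 0))
    (hL2 : ∫ t in (-a)..a, ‖g' t‖^2 = C^2)
    (hint : MeasureTheory.IntegrableOn (fun t => ‖g' t‖^2) (Ioo (-a) a)) :
    ∀ t ∈ Ioo (-a) a,
      ‖((a : ℂ)^2 - (t : ℂ)^2) * x' t‖ ≤ C * Real.sqrt (a^2 - t^2) / Real.sqrt a ∧
      ‖x' t‖ ≤ (C / Real.sqrt a) * (1 / Real.sqrt (a^2 - t^2)) := by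
  intro t ht
  have hL2' : ∫ u in Ioo (-a) a, ‖g' u‖ ^ 2 ≤ C ^ 2 := by
    rw [← hL2, intervalIntegral.integral_of_le (by linarith), integral_Ioc_eq_integral_Ioo]
  have hF := norm_le_mul_sqrt_sub_abs_of_tendsto_zero ht hlim_left hlim_right fun s hs =>
    norm_sub_le_mul_sqrt_abs_sub_of_hasDerivAt ordConnected_Ioo hC.le hg hint hL2' hs ht
  have hat : |t| ≤ a := (abs_lt.mpr ht).le
  have hA : 0 < a ^ 2 - t ^ 2 := by nlinarith [sq_abs t, abs_lt.mpr ht, abs_nonneg t]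
  have hFt : ‖((a : ℂ) ^ 2 - (t : ℂ) ^ 2) * x' t‖ ≤ C * √(a ^ 2 - t ^ 2) / √a :=
    calc _ ≤ C * √((a ^ 2 - t ^ 2) / a) :=
          hF.trans (mul_le_mul_of_nonneg_left (Real.sqrt_le_sqrt
            (sub_abs_le_sq_sub_sq_div ha hat)) hC.le)
      _ = C * √(a ^ 2 - t ^ 2) / √a := by rw [Real.sqrt_div hA.le, mul_div_assoc]
  refine ⟨hFt, norm_le_mul_one_div_sqrt_of_norm_ofReal_mul_le hA ?_⟩
  rw [mul_div_right_comm] at hFt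
  exact_mod_cast hFt

theorem stmt14 (a C : ℝ) (ha : 0 < a) (hC : 0 < C)
    (x x' g' : ℝ → ℂ)
    (hx : ∀ t ∈ Ioo (-a) a, HasDerivAt x (x' t) t)
    (hg : ∀ t ∈ Ioo (-a) a,
      HasDerivAt (fun s : ℝ => ((a : ℂ)^2 - (s : ℂ)^2) * x' s) (g' t) t)
    (hlim_left :
      Tendsto (fun t : ℝ => ((a : ℂ)^2 - (t : ℂ)^2) * x' t) (nhdsWithin (-a) (Ioo (-a) a)) (nhds 0))
    (hlim_right :
      Tendsto (fun t : ℝ => ((a : ℂ)^2 - (t : ℂ)^2) * x' t) (nhdsWithin a (Ioo (-a) a)) (nhds 0))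
    (hL2 : ∫ t in (-a)..a, ‖g' t‖^2 = C^2)
    (hint : MeasureTheory.IntegrableOn (fun t => ‖g' t‖^2) (Ioo (-a) a)) :
    ∀ t ∈ Ioo (-a) a,
      ‖((a : ℂ)^2 - (t : ℂ)^2) * x' t‖ ≤ C * Real.sqrt (a^2 - t^2) / Real.sqrt a ∧
      ‖x' t‖ ≤ (C / Real.sqrt a) * (1 / Real.sqrt (a^2 - t^2)) :=
  stmt14_general a C ha hC x' g' hg hlim_left hlim_right hL2 hint
end

section
/- Let a > 0 and x ∈ C²([-a, a]) (so in particular x' is bounded). Then the following identity holds for all t ∈ ℝ: ∫_{-a}^{a} [-(d/dξ)((1 - ξ²/a²) x'(ξ)) + ξ² x(ξ)] e^{itξ} dξ = [-(d/dt)((1 - t²/a²) (d/dt)) + t²] ∫_{-a}^{a} x(ξ) e^{itξ} dξ; i.e., the prolate spheroid differential expression L commutes with the truncated Fourier transform on such functions (the boundary terms vanish since (1 - ξ²/a²) vanishes at ξ = ±a). -/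
/-!
Differentiating under the integral sign turns the right-hand side into
`∫ σ(t, ξ) x(ξ) e^{itξ} dξ`, where `σ(t, ξ) e^{itξ}` is `L` applied to the kernel `e^{itξ}` in the
variable `t`. The same kernel satisfies `L_ξ e^{itξ} = σ(t, ξ) e^{itξ}`, so integrating by parts
twice moves `L` from `x` onto the kernel in `ξ`; the boundary terms carry the factor `1 - ξ²/a²`,
which vanishes at `ξ = ±a`.
-/

open Set MeasureTheory Complex
open scoped Interval

noncomputable def prolateCoeff (a s : ℝ) : ℂ := 1 - (s : ℂ) ^ 2 / (a : ℂ) ^ 2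

/-- `L` applied to `e^{itξ}`, as a function of `ξ` or of `t`, is `prolateSymbol a t ξ * e^{itξ}`. -/
noncomputable def prolateSymbol (a t ξ : ℝ) : ℂ :=
  (t : ℂ) ^ 2 + (ξ : ℂ) ^ 2 - (t : ℂ) ^ 2 * (ξ : ℂ) ^ 2 / (a : ℂ) ^ 2 + 2 * I * t * ξ / (a : ℂ) ^ 2

theorem hasDerivAt_prolateCoeff (a s : ℝ) :
    HasDerivAt (prolateCoeff a) (-(2 * (s : ℂ)) / (a : ℂ) ^ 2) s :=
  (((hasDerivAt_pow 2 (s : ℂ)).div_const ((a : ℂ) ^ 2)).const_sub 1).comp_ofReal.congr_deriv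
    (by push_cast; ring)

theorem prolateCoeff_self {a : ℝ} (ha : a ≠ 0) : prolateCoeff a a = 0 := by
  simp [prolateCoeff, ha]

theorem prolateCoeff_neg_self {a : ℝ} (ha : a ≠ 0) : prolateCoeff a (-a) = 0 := by
  simp [prolateCoeff, ha]

theorem hasDerivAt_cexp_I_mul_ofReal_mul (t ξ : ℝ) :
    HasDerivAt (fun s : ℝ => cexp (I * s * ξ)) (I * ξ * cexp (I * t * ξ)) t := by
  simpa [mul_comm] using (((hasDerivAt_id (t : ℂ)).const_mul I).mul_const (ξ : ℂ)).cexp.comp_ofReal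

theorem hasDerivAt_cexp_I_mul_mul_ofReal (t ξ : ℝ) :
    HasDerivAt (fun s : ℝ => cexp (I * t * s)) (I * t * cexp (I * t * ξ)) ξ := by
  simpa [mul_comm] using ((hasDerivAt_id (ξ : ℂ)).const_mul (I * t)).cexp.comp_ofReal

theorem hasDerivAt_integral_mul_cexp {α β : ℝ} {c : ℝ → ℂ} (hc : IntervalIntegrable c volume α β)
    (s : ℝ) :
    HasDerivAt (fun s : ℝ => ∫ ξ in α..β, c ξ * cexp (I * s * ξ))
      (∫ ξ in α..β, I * ξ * c ξ * cexp (I * s * ξ)) s := by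
  have he : ∀ u : ℝ, ContinuousOn (fun ξ : ℝ => cexp (I * u * ξ)) [[α, β]] := by
    intro u; fun_prop
  have hIc : IntervalIntegrable (fun ξ : ℝ => I * ξ * c ξ) volume α β :=
    hc.continuousOn_mul (by fun_prop)
  refine (intervalIntegral.hasDerivAt_integral_of_dominated_loc_of_deriv_le (𝕜 := ℝ)
    (F' := fun u ξ => I * ξ * c ξ * cexp (I * u * ξ)) (bound := fun ξ => |ξ| * ‖c ξ‖)
    Filter.univ_mem
    (.of_forall fun u => (hc.mul_continuousOn (he u)).def'.aestronglyMeasurable)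
    (hc.mul_continuousOn (he s)) (hIc.mul_continuousOn (he s)).def'.aestronglyMeasurable
    (.of_forall fun ξ _ u _ => ?_) (hc.norm.continuousOn_mul (by fun_prop))
    (.of_forall fun ξ _ u _ => ?_)).2
  · simp [norm_exp]
  · simpa [mul_comm, mul_left_comm, mul_assoc] using
      (hasDerivAt_cexp_I_mul_ofReal_mul u ξ).const_mul (c ξ)

theorem prolateOp_integral_mul_cexp {α β a : ℝ} {x : ℝ → ℂ} (hx : IntervalIntegrable x volume α β)
    (t : ℝ) :
    -(deriv (fun s : ℝ => prolateCoeff a s *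
        deriv (fun s : ℝ => ∫ ξ in α..β, x ξ * cexp (I * s * ξ)) s) t) +
      (t : ℂ) ^ 2 * ∫ ξ in α..β, x ξ * cexp (I * t * ξ) =
    ∫ ξ in α..β, prolateSymbol a t ξ * x ξ * cexp (I * t * ξ) := by
  have hmulI : ∀ {g : ℝ → ℂ}, IntervalIntegrable g volume α β →
      IntervalIntegrable (fun ξ : ℝ => I * ξ * g ξ) volume α β := fun hg =>
    hg.continuousOn_mul (by fun_prop)
  have hmulE : ∀ {g : ℝ → ℂ}, IntervalIntegrable g volume α β →
      IntervalIntegrable (fun ξ : ℝ => g ξ * cexp (I * t * ξ)) volume α β := fun hg =>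
    hg.mul_continuousOn (by fun_prop)
  have h0 := hmulE hx
  have h1 := hmulE (hmulI hx)
  have h2 := hmulE (hmulI (hmulI hx))
  have hF := hasDerivAt_integral_mul_cexp hx
  have hF' : HasDerivAt (deriv fun s : ℝ => ∫ ξ in α..β, x ξ * cexp (I * s * ξ))
      (∫ ξ in α..β, I * ξ * (I * ξ * x ξ) * cexp (I * t * ξ)) t := by
    rw [funext fun s => (hF s).deriv]
    exact hasDerivAt_integral_mul_cexp (hmulI hx) t
  have hG : HasDerivAt (fun s : ℝ => prolateCoeff a s *
      deriv (fun s : ℝ => ∫ ξ in α..β, x ξ * cexp (I * s * ξ)) s) _ t :=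
    (hasDerivAt_prolateCoeff a t).mul hF'
  simp only [hG.deriv, (hF t).deriv, ← intervalIntegral.integral_const_mul]
  rw [← intervalIntegral.integral_add, ← intervalIntegral.integral_neg,
    ← intervalIntegral.integral_add]
  · refine intervalIntegral.integral_congr fun ξ _ => ?_
    simp only [prolateSymbol, prolateCoeff]
    linear_combination ((t : ℂ) ^ 2 / (a : ℂ) ^ 2 - 1) * (ξ : ℂ) ^ 2 * x ξ * cexp (I * t * ξ) * I_sq
  exacts [((h1.const_mul _).add (h2.const_mul _)).neg, h0.const_mul _, h1.const_mul _,
    h2.const_mul _]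

theorem integral_prolateOp_mul_cexp {a : ℝ} (ha : 0 < a) {x x' q : ℝ → ℂ}
    (hx : ∀ ξ ∈ Icc (-a) a, HasDerivWithinAt x (x' ξ) (Icc (-a) a) ξ)
    (hq : ∀ ξ ∈ Icc (-a) a,
      HasDerivWithinAt (fun s => prolateCoeff a s * x' s) (q ξ) (Icc (-a) a) ξ)
    (hqc : ContinuousOn q (Icc (-a) a)) (t : ℝ) :
    ∫ ξ in (-a)..a, (-(q ξ) + (ξ : ℂ) ^ 2 * x ξ) * cexp (I * t * ξ) =
      ∫ ξ in (-a)..a, prolateSymbol a t ξ * x ξ * cexp (I * t * ξ) := by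
  have hab : -a ≤ a := by linarith
  have hxc : ContinuousOn x (Icc (-a) a) := fun ξ hξ => (hx ξ hξ).continuousWithinAt
  have hint : ∀ {f : ℝ → ℂ}, ContinuousOn f (Icc (-a) a) → IntervalIntegrable f volume (-a) a :=
    ContinuousOn.intervalIntegrable_of_Icc hab
  -- Both integrations by parts at once: `G` vanishes at `±a` together with `prolateCoeff`.
  set G : ℝ → ℂ := fun ξ => (prolateCoeff a ξ * x' ξ - I * t * (prolateCoeff a ξ * x ξ)) *
    cexp (I * t * ξ)
  set G' : ℝ → ℂ := fun ξ => (q ξ + 2 * I * t * ξ / (a : ℂ) ^ 2 * x ξ +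
    (t : ℂ) ^ 2 * prolateCoeff a ξ * x ξ) * cexp (I * t * ξ)
  have hG : ∀ ξ ∈ Icc (-a) a, HasDerivWithinAt G (G' ξ) (Icc (-a) a) ξ := fun ξ hξ =>
    (((hq ξ hξ).sub (((hasDerivAt_prolateCoeff a ξ).hasDerivWithinAt.mul (hx ξ hξ)).const_mul
      (I * t))).mul (hasDerivAt_cexp_I_mul_mul_ofReal t ξ).hasDerivWithinAt).congr_deriv (by
        simp only [G', Pi.sub_apply, Pi.mul_apply]
        linear_combination -(t : ℂ) ^ 2 * prolateCoeff a ξ * x ξ * cexp (I * t * ξ) * I_sq)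
  have hG'_integral : ∫ ξ in (-a)..a, G' ξ = 0 := by
    rw [intervalIntegral.integral_eq_sub_of_hasDerivAt_of_le hab
      (fun ξ hξ => (hG ξ hξ).continuousWithinAt)
      (fun ξ hξ => (hG ξ (Ioo_subset_Icc_self hξ)).hasDerivAt (Icc_mem_nhds hξ.1 hξ.2))
      (hint (by simp only [G', prolateCoeff]; fun_prop))]
    simp [G, prolateCoeff_self ha.ne', prolateCoeff_neg_self ha.ne']
  rw [← sub_eq_zero, ← intervalIntegral.integral_sub (hint (by fun_prop))
    (hint (by simp only [prolateSymbol]; fun_prop)), ← neg_eq_zero,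
    ← intervalIntegral.integral_neg, ← hG'_integral]
  refine intervalIntegral.integral_congr fun ξ _ => ?_
  simp only [G', prolateSymbol, prolateCoeff]
  ring

theorem stmt18_general (a : ℝ) (ha : 0 < a) (x x' q : ℝ → ℂ)
    (hx : ∀ t ∈ Icc (-a) a, HasDerivWithinAt x (x' t) (Icc (-a) a) t)
    (hq : ∀ t ∈ Icc (-a) a,
      HasDerivWithinAt (fun s : ℝ => ((1 : ℂ) - (s : ℂ)^2 / (a : ℂ)^2) * x' s)
        (q t) (Icc (-a) a) t)
    (hqc : ContinuousOn q (Icc (-a) a))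
    (F : ℝ → ℂ)
    (hF : ∀ t : ℝ, F t = ∫ ξ in (-a)..a, x ξ * Complex.exp (Complex.I * t * ξ)) :
    ∀ t : ℝ,
      (∫ ξ in (-a)..a, (-(q ξ) + (ξ : ℂ)^2 * x ξ) * Complex.exp (Complex.I * t * ξ)) =
        -(deriv (fun s : ℝ => ((1 : ℂ) - (s : ℂ)^2 / (a : ℂ)^2) * deriv F s) t) +
          (t : ℂ)^2 * F t := by
  intro t
  obtain rfl : F = fun s : ℝ => ∫ ξ in (-a)..a, x ξ * cexp (I * s * ξ) := funext hF
  have hxc : ContinuousOn x (Icc (-a) a) := fun ξ hξ => (hx ξ hξ).continuousWithinAt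
  rw [integral_prolateOp_mul_cexp ha hx hq hqc t]
  exact (prolateOp_integral_mul_cexp (hxc.intervalIntegrable_of_Icc (by linarith)) t).symm

/-- The prolate spheroid differential expression commutes with the truncated
Fourier transform on functions of class `C²([-a,a])`. -/
theorem stmt18 (a : ℝ) (ha : 0 < a) (x x' q : ℝ → ℂ)
    (hx : ∀ t ∈ Icc (-a) a, HasDerivWithinAt x (x' t) (Icc (-a) a) t)
    (hx' : ContinuousOn x' (Icc (-a) a))
    (hq : ∀ t ∈ Icc (-a) a,
      HasDerivWithinAt (fun s : ℝ => ((1 : ℂ) - (s : ℂ)^2 / (a : ℂ)^2) * x' s)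
        (q t) (Icc (-a) a) t)
    (hqc : ContinuousOn q (Icc (-a) a))
    (F : ℝ → ℂ)
    (hF : ∀ t : ℝ, F t = ∫ ξ in (-a)..a, x ξ * Complex.exp (Complex.I * t * ξ)) :
    ∀ t : ℝ,
      (∫ ξ in (-a)..a, (-(q ξ) + (ξ : ℂ)^2 * x ξ) * Complex.exp (Complex.I * t * ξ)) =
        -(deriv (fun s : ℝ => ((1 : ℂ) - (s : ℂ)^2 / (a : ℂ)^2) * deriv F s) t) +
          (t : ℂ)^2 * F t :=
  stmt18_general a ha x x' q hx hq hqc F hF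
end

section
/- Let a > 0 and let x : (-a, a) → ℂ be C¹ with x' absolutely continuous on compact subintervals, and suppose x ∈ L²(-a, a), Lx ∈ L²(-a, a), lim_{t→±a}(1 - t²/a²) x'(t) = 0, and x extends continuously to [-a, a]. Then ∫_{-a}^{a} (Lx)(ξ) conj(x(ξ)) dξ = ∫_{-a}^{a} (1 - ξ²/a²) |x'(ξ)|² dξ + ∫_{-a}^{a} ξ² |x(ξ)|² dξ; in particular ⟨Lx, x⟩ ≥ 0. -/
/-!
Write `p t = 1 - t²/a²`. On `(-a, a)` the product rule gives
`(p x' x̄)' = (p x')' x̄ + p |x'|²`, and `(p x')' x̄ = (t² x - Lx) x̄` is integrable because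
`x, Lx ∈ L²`. Integrating over `[c, d] ⊂ (-a, a)` and letting `c → -a`, `d → a`, the boundary
term `p x' x̄` tends to `0`, since `p x' → 0` and `x` has limits at `±a`. The integrals of
`p |x'|² ≥ 0` therefore converge, so `p |x'|²` is integrable, and in the limit
`∫ (p x')' x̄ = -∫ p |x'|²`.
-/

open Set Filter MeasureTheory

open scoped Topology ComplexConjugate

section ImproperFTC

variable {u v : ℝ}

lemma eventually_lt_le_lt_of_nhdsGT_prod_nhdsLT (huv : u < v) :
    ∀ᶠ p : ℝ × ℝ in 𝓝[>] u ×ˢ 𝓝[<] v, u < p.1 ∧ p.1 ≤ p.2 ∧ p.2 < v := by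
  have hm : u < (u + v) / 2 ∧ (u + v) / 2 < v := by constructor <;> linarith
  filter_upwards [prod_mem_prod (Ioo_mem_nhdsGT hm.1) (Ioo_mem_nhdsLT hm.2)]
    with p ⟨⟨hu, hp1⟩, hp2, hv⟩
  exact ⟨hu, by linarith, hv⟩

lemma setIntegral_Ioc_restrict_eq_intervalIntegral {E : Type*} [NormedAddCommGroup E]
    [NormedSpace ℝ E] {s : Set ℝ} {c d : ℝ} (f : ℝ → E) (hcd : c ≤ d) (hsub : Ioc c d ⊆ s) :
    ∫ t in Ioc c d, f t ∂(volume.restrict s) = ∫ t in c..d, f t := by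
  rw [intervalIntegral.integral_of_le hcd, Measure.restrict_restrict measurableSet_Ioc,
    inter_eq_self_of_subset_left hsub]

lemma tendsto_intervalIntegral_nhdsGT_prod_nhdsLT {E : Type*} [NormedAddCommGroup E]
    [NormedSpace ℝ E] {f : ℝ → E} (huv : u < v) (hf : IntegrableOn f (Ioo u v)) :
    Tendsto (fun p : ℝ × ℝ => ∫ t in p.1..p.2, f t) (𝓝[>] u ×ˢ 𝓝[<] v)
      (𝓝 (∫ t in Ioo u v, f t)) := by
  have hcover : AECover (volume.restrict (Ioo u v)) (𝓝[>] u ×ˢ 𝓝[<] v)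
      (fun p => Ioc p.1 p.2) :=
    aecover_Ioo_of_Ioc (tendsto_fst.mono_right nhdsWithin_le_nhds)
      (tendsto_snd.mono_right nhdsWithin_le_nhds)
  refine (hcover.integral_tendsto_of_countably_generated hf).congr' ?_
  filter_upwards [eventually_lt_le_lt_of_nhdsGT_prod_nhdsLT huv] with p ⟨hu, hp, hv⟩
  exact setIntegral_Ioc_restrict_eq_intervalIntegral f hp
    fun t ht => ⟨hu.trans ht.1, ht.2.trans_lt hv⟩

lemma integrableOn_Ioo_of_tendsto_intervalIntegral_of_nonneg {f : ℝ → ℝ} {I : ℝ}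
    (huv : u < v) (hf : LocallyIntegrableOn f (Ioo u v)) (hf0 : ∀ t ∈ Ioo u v, 0 ≤ f t)
    (hI : Tendsto (fun p : ℝ × ℝ => ∫ t in p.1..p.2, f t) (𝓝[>] u ×ˢ 𝓝[<] v) (𝓝 I)) :
    IntegrableOn f (Ioo u v) := by
  have hm : u < (u + v) / 2 ∧ (u + v) / 2 < v := by constructor <;> linarith
  obtain ⟨c, -, hc_mem, hc⟩ := exists_seq_strictAnti_tendsto' hm.1
  obtain ⟨d, -, hd_mem, hd⟩ := exists_seq_strictMono_tendsto' hm.2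
  have hcd : ∀ n, c n ≤ d n := fun n => ((hc_mem n).2.trans (hd_mem n).1).le
  have hsub : ∀ n, Icc (c n) (d n) ⊆ Ioo u v := fun n =>
    Icc_subset_Ioo (hc_mem n).1 (hd_mem n).2
  have hcd_lim : Tendsto (fun n => (c n, d n)) atTop (𝓝[>] u ×ˢ 𝓝[<] v) :=
    (tendsto_nhdsWithin_iff.2 ⟨hc, .of_forall fun n => (hc_mem n).1⟩).prodMk
      (tendsto_nhdsWithin_iff.2 ⟨hd, .of_forall fun n => (hd_mem n).2⟩)
  have hcover : AECover (volume.restrict (Ioo u v)) atTop (fun n => Ioc (c n) (d n)) :=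
    aecover_Ioo_of_Ioc hc hd
  refine hcover.integrable_of_integral_tendsto_of_nonneg_ae I (fun n => ?_)
    ((ae_restrict_mem measurableSet_Ioo).mono hf0) ?_
  · rw [IntegrableOn, Measure.restrict_restrict measurableSet_Ioc,
      inter_eq_self_of_subset_left (Ioc_subset_Icc_self.trans (hsub n))]
    exact (hf.integrableOn_compact_subset (hsub n) isCompact_Icc).mono_set Ioc_subset_Icc_self
  · exact (hI.comp hcd_lim).congr fun n =>
      (setIntegral_Ioc_restrict_eq_intervalIntegral f (hcd n)
        (Ioc_subset_Icc_self.trans (hsub n))).symm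

variable {F g : ℝ → ℂ} {h : ℝ → ℝ}

lemma intervalIntegral_add_ofReal_eq_sub {c d : ℝ}
    (hF : ∀ t ∈ Ioo u v, HasDerivAt F (g t + h t) t) (hg : IntegrableOn g (Ioo u v))
    (hh : LocallyIntegrableOn h (Ioo u v)) (hc : u < c) (hcd : c ≤ d) (hd : d < v) :
    (∫ t in c..d, g t) + ↑(∫ t in c..d, h t) = F d - F c := by
  have hsub : uIcc c d ⊆ Ioo u v := (uIcc_of_le hcd).symm ▸ Icc_subset_Ioo hc hd
  have hgi : IntervalIntegrable g volume c d := (hg.mono_set hsub).intervalIntegrable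
  have hhi : IntervalIntegrable (fun t => (h t : ℂ)) volume c d :=
    IntegrableOn.intervalIntegrable (hh.integrableOn_compact_subset hsub isCompact_uIcc).ofReal
  rw [← intervalIntegral.integral_ofReal, ← intervalIntegral.integral_add hgi hhi]
  exact intervalIntegral.integral_eq_sub_of_hasDerivAt (fun t ht => hF t (hsub ht))
    (hgi.add hhi)

theorem integral_add_integral_eq_sub_of_hasDerivAt_of_nonneg {Fu Fv : ℂ} (huv : u < v)
    (hF : ∀ t ∈ Ioo u v, HasDerivAt F (g t + h t) t) (hg : IntegrableOn g (Ioo u v))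
    (hh : LocallyIntegrableOn h (Ioo u v)) (hh0 : ∀ t ∈ Ioo u v, 0 ≤ h t)
    (hu : Tendsto F (𝓝[>] u) (𝓝 Fu)) (hv : Tendsto F (𝓝[<] v) (𝓝 Fv)) :
    (∫ t in Ioo u v, g t) + ↑(∫ t in Ioo u v, h t) = Fv - Fu := by
  have hFTC : ∀ᶠ p : ℝ × ℝ in 𝓝[>] u ×ˢ 𝓝[<] v,
      (∫ t in p.1..p.2, g t) + ↑(∫ t in p.1..p.2, h t) = F p.2 - F p.1 := by
    filter_upwards [eventually_lt_le_lt_of_nhdsGT_prod_nhdsLT huv] with p ⟨hu, hp, hv⟩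
    exact intervalIntegral_add_ofReal_eq_sub hF hg hh hu hp hv
  have hF_lim : Tendsto (fun p : ℝ × ℝ => F p.2 - F p.1) (𝓝[>] u ×ˢ 𝓝[<] v)
      (𝓝 (Fv - Fu)) := (hv.comp tendsto_snd).sub (hu.comp tendsto_fst)
  have hg_lim := tendsto_intervalIntegral_nhdsGT_prod_nhdsLT huv hg
  -- Taking real parts in `hFTC` shows that the integrals of `h` over `[c, d]` converge.
  have hh_int : IntegrableOn h (Ioo u v) := by
    refine integrableOn_Ioo_of_tendsto_intervalIntegral_of_nonneg huv hh hh0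
      ((Complex.continuous_re.tendsto _).comp (hF_lim.sub hg_lim) |>.congr' ?_)
    filter_upwards [hFTC] with p hp
    simp [← hp]
  refine tendsto_nhds_unique ?_ (hF_lim.congr' (hFTC.mono fun p hp => hp.symm))
  exact hg_lim.add ((Complex.continuous_ofReal.tendsto _).comp
    (tendsto_intervalIntegral_nhdsGT_prod_nhdsLT huv hh_int))

end ImproperFTC

lemma ContinuousOn.of_mul_left {X 𝕜 : Type*} [TopologicalSpace X] [NormedField 𝕜] {p y : X → 𝕜}
    {s : Set X} (hpy : ContinuousOn (fun t => p t * y t) s) (hp : ContinuousOn p s)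
    (hp0 : ∀ t ∈ s, p t ≠ 0) : ContinuousOn y s :=
  (hpy.div hp hp0).congr fun t ht => (mul_div_cancel_left₀ _ (hp0 t ht)).symm

lemma hasDerivAt_ofReal_mul_mul_conj {w : ℝ → ℝ} {y y' q : ℝ → ℂ} {t : ℝ}
    (hq : HasDerivAt (fun s => (w s : ℂ) * y' s) (q t) t) (hy : HasDerivAt y (y' t) t) :
    HasDerivAt (fun s => (w s : ℂ) * y' s * conj (y s))
      (q t * conj (y t) + ((w t * ‖y' t‖ ^ 2 : ℝ) : ℂ)) t := by
  refine (hq.mul hy.star).congr_deriv ?_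
  rw [Complex.ofReal_mul, Complex.ofReal_pow, ← Complex.mul_conj', starRingEnd_apply,
    starRingEnd_apply]
  ring

theorem integral_mul_conj_eq_neg_integral_mul_norm_sq {u v : ℝ} (huv : u < v) {w : ℝ → ℝ}
    {y y' q : ℝ → ℂ} (hw : ContinuousOn w (Ioo u v)) (hw0 : ∀ t ∈ Ioo u v, 0 < w t)
    (hy : ∀ t ∈ Ioo u v, HasDerivAt y (y' t) t)
    (hq : ∀ t ∈ Ioo u v, HasDerivAt (fun s => (w s : ℂ) * y' s) (q t) t)
    (hqy : IntegrableOn (fun t => q t * conj (y t)) (Ioo u v))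
    (hu : Tendsto (fun t => (w t : ℂ) * y' t) (𝓝[>] u) (𝓝 0))
    (hv : Tendsto (fun t => (w t : ℂ) * y' t) (𝓝[<] v) (𝓝 0))
    (hyc : ∃ yc : ℝ → ℂ, ContinuousOn yc (Icc u v) ∧ EqOn y yc (Ioo u v)) :
    ∫ t in Ioo u v, q t * conj (y t) = -↑(∫ t in Ioo u v, w t * ‖y' t‖ ^ 2) := by
  obtain ⟨yc, hyc, hyyc⟩ := hyc
  have hy_lim : ∀ b ∈ Icc u v,
      Tendsto (fun t => conj (y t)) (𝓝[Ioo u v] b) (𝓝 (conj (yc b))) := fun b hb =>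
    (Complex.continuous_conj.tendsto _).comp <| tendsto_nhdsWithin_congr
      (fun t ht => (hyyc ht).symm) ((hyc b hb).mono Ioo_subset_Icc_self)
  have hy' : ContinuousOn y' (Ioo u v) :=
    .of_mul_left (fun t ht => (hq t ht).continuousAt.continuousWithinAt)
      (Complex.continuous_ofReal.comp_continuousOn hw)
      fun t ht => Complex.ofReal_ne_zero.2 (hw0 t ht).ne'
  have hgreen := integral_add_integral_eq_sub_of_hasDerivAt_of_nonneg huv
    (fun t ht => hasDerivAt_ofReal_mul_mul_conj (hq t ht) (hy t ht)) hqy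
    ((hw.mul (hy'.norm.pow 2)).locallyIntegrableOn measurableSet_Ioo)
    (fun t ht => mul_nonneg (hw0 t ht).le (sq_nonneg _))
    (by simpa using hu.mul (nhdsWithin_Ioo_eq_nhdsGT huv ▸ hy_lim u (left_mem_Icc.2 huv.le)))
    (by simpa using hv.mul (nhdsWithin_Ioo_eq_nhdsLT huv ▸ hy_lim v (right_mem_Icc.2 huv.le)))
  rw [sub_zero] at hgreen
  exact eq_neg_of_add_eq_zero_left hgreen

lemma MeasureTheory.MemLp.integrable_mul_conj {α : Type*} [MeasurableSpace α] {μ : Measure α}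
    {f g : α → ℂ} (hf : MemLp f 2 μ) (hg : MemLp g 2 μ) :
    Integrable (fun t => f t * conj (g t)) μ :=
  hf.integrable_mul hg.star

lemma MeasureTheory.MemLp.ofReal_sq_mul_of_restrict_Ioo {p : ENNReal} {a : ℝ} {x : ℝ → ℂ}
    (hx : MemLp x p (volume.restrict (Ioo (-a) a))) :
    MemLp (fun t : ℝ => (t : ℂ) ^ 2 * x t) p (volume.restrict (Ioo (-a) a)) := by
  refine hx.of_le_mul (c := a ^ 2) ((Continuous.aestronglyMeasurable (by fun_prop)).mul hx.1) ?_
  filter_upwards [ae_restrict_mem measurableSet_Ioo] with t ht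
  rw [norm_mul, norm_pow, Complex.norm_real, Real.norm_eq_abs, sq_abs]
  exact mul_le_mul_of_nonneg_right (sq_le_sq' ht.1.le ht.2.le) (norm_nonneg _)

lemma one_sub_sq_div_sq_nonneg {a t : ℝ} (ht : t ∈ Icc (-a) a) : 0 ≤ 1 - t ^ 2 / a ^ 2 := by
  linarith [div_le_one_of_le₀ (sq_le_sq' ht.1 ht.2) (sq_nonneg a)]

lemma one_sub_sq_div_sq_pos {a t : ℝ} (ht : t ∈ Ioo (-a) a) : 0 < 1 - t ^ 2 / a ^ 2 := by
  have hta : t ^ 2 < a ^ 2 := sq_lt_sq' ht.1 ht.2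
  linarith [(div_lt_one ((sq_nonneg t).trans_lt hta)).2 hta]

theorem stmt19 (a : ℝ) (ha : 0 < a) (x x' q : ℝ → ℂ)
    (hx : ∀ t ∈ Ioo (-a) a, HasDerivAt x (x' t) t)
    (hq : ∀ t ∈ Ioo (-a) a,
      HasDerivAt (fun s : ℝ => ((1 : ℂ) - (s : ℂ)^2 / (a : ℂ)^2) * x' s) (q t) t)
    (Lx : ℝ → ℂ)
    (hLx : ∀ t ∈ Ioo (-a) a, Lx t = -(q t) + (t : ℂ)^2 * x t)
    (hxL2 : MemLp x 2 (volume.restrict (Ioo (-a) a)))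
    (hLxL2 : MemLp Lx 2 (volume.restrict (Ioo (-a) a)))
    (hlim_left :
      Tendsto (fun t : ℝ => ((1 : ℂ) - (t : ℂ)^2 / (a : ℂ)^2) * x' t)
        (nhdsWithin (-a) (Ioo (-a) a)) (nhds 0))
    (hlim_right :
      Tendsto (fun t : ℝ => ((1 : ℂ) - (t : ℂ)^2 / (a : ℂ)^2) * x' t)
        (nhdsWithin a (Ioo (-a) a)) (nhds 0))
    (hcont : ∃ xc : ℝ → ℂ, ContinuousOn xc (Icc (-a) a) ∧ EqOn x xc (Ioo (-a) a)) :
    (∫ t in (-a)..a, Lx t * starRingEnd ℂ (x t)) =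
      ((∫ t in (-a)..a, (1 - t^2/a^2) * ‖x' t‖^2) +
        ∫ t in (-a)..a, t^2 * ‖x t‖^2 : ℝ) ∧
    0 ≤ (∫ t in (-a)..a, Lx t * starRingEnd ℂ (x t)).re := by
  have ha' : -a < a := by linarith
  have hw : ∀ s : ℝ, (1 : ℂ) - (s : ℂ) ^ 2 / (a : ℂ) ^ 2 = ((1 - s ^ 2 / a ^ 2 : ℝ) : ℂ) :=
    fun s => by push_cast; rfl
  simp only [hw] at hq hlim_left hlim_right
  rw [nhdsWithin_Ioo_eq_nhdsGT ha'] at hlim_left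
  rw [nhdsWithin_Ioo_eq_nhdsLT ha'] at hlim_right
  have hpotential (t : ℝ) : (t : ℂ) ^ 2 * x t * conj (x t) = ((t ^ 2 * ‖x t‖ ^ 2 : ℝ) : ℂ) := by
    rw [mul_assoc, Complex.mul_conj']
    push_cast
    ring
  have hsplit : EqOn (fun t => Lx t * conj (x t))
      (fun t => ((t ^ 2 * ‖x t‖ ^ 2 : ℝ) : ℂ) - q t * conj (x t)) (Ioo (-a) a) :=
    fun t ht => by simp only [hLx t ht, ← hpotential]; ring
  have hpot_int : IntegrableOn (fun t => ((t ^ 2 * ‖x t‖ ^ 2 : ℝ) : ℂ)) (Ioo (-a) a) := by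
    simpa only [IntegrableOn, hpotential] using
      hxL2.ofReal_sq_mul_of_restrict_Ioo.integrable_mul_conj hxL2
  have hqx : IntegrableOn (fun t => q t * conj (x t)) (Ioo (-a) a) :=
    (hpot_int.sub (hLxL2.integrable_mul_conj hxL2)).congr_fun
      (fun t ht => by simp [hsplit ht]) measurableSet_Ioo
  have hgreen := integral_mul_conj_eq_neg_integral_mul_norm_sq ha' (by fun_prop)
    (fun t ht => one_sub_sq_div_sq_pos ht) hx hq hqx hlim_left hlim_right hcont
  have heq : (∫ t in (-a)..a, Lx t * conj (x t)) =
      ((∫ t in (-a)..a, (1 - t^2/a^2) * ‖x' t‖^2) + ∫ t in (-a)..a, t^2 * ‖x t‖^2 : ℝ) := by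
    simp only [intervalIntegral.integral_of_le ha'.le, integral_Ioc_eq_integral_Ioo,
      setIntegral_congr_fun measurableSet_Ioo hsplit, integral_sub hpot_int hqx,
      integral_complex_ofReal, hgreen]
    push_cast
    ring
  refine ⟨heq, ?_⟩
  rw [heq, Complex.ofReal_re]
  exact add_nonneg
    (intervalIntegral.integral_nonneg ha'.le fun t ht =>
      mul_nonneg (one_sub_sq_div_sq_nonneg ht) (sq_nonneg _))
    (intervalIntegral.integral_nonneg ha'.le fun t _ => by positivity)
end
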